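/- arXiv:1812.01935 — 2 statements merged into one kernel-verified Lean document; each statement's English description precedes it below -/
import Mathlib

section
/- Suppose a_τ > 0. Then τ_cp < τ_m, the function ρ is strictly increasing on the open interval (τ_cp, τ_m), strictly decreasing on (−∞, τ_cp), and strictly decreasing on (τ_m, +∞). -/
open scoped RealInnerProductSpace
open Set

/-!
Writing `c = aᵀg`, `q = aᵀBa` and `s = ‖a‖²`, the derivative of `ρ` is
`(c + τ (q - s c)) / (1 - τ s)³ = a_τ (τ - τ_cp) / (s (τ_m - τ))³`,
so its sign is that of `(τ - τ_cp) (τ_m - τ)`. Moreover `τ_cp < τ_m` amounts to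
`-c s < q - s c`, i.e. to `0 < aᵀBa`, which is positive definiteness of `B`.
-/

theorem Matrix.PosDef.inner_self_toEuclideanLin_pos {ι : Type*} [Fintype ι] [DecidableEq ι]
    {B : Matrix ι ι ℝ} (hB : B.PosDef) {x : EuclideanSpace ℝ ι} (hx : x ≠ 0) :
    0 < ⟪x, B.toEuclideanLin x⟫ := by
  rw [EuclideanSpace.inner_eq_star_dotProduct, Matrix.ofLp_toLpLin, Matrix.toLin'_apply,
    dotProduct_comm]
  exact hB.dotProduct_mulVec_pos (by simpa using hx)

section Monotonicity

variable {D : Set ℝ} {f f' : ℝ → ℝ}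

theorem strictMonoOn_of_hasDerivAt_pos (hD : Convex ℝ D) (hDo : IsOpen D)
    (hf : ∀ x ∈ D, HasDerivAt f (f' x) x) (hf' : ∀ x ∈ D, 0 < f' x) : StrictMonoOn f D :=
  strictMonoOn_of_hasDerivWithinAt_pos hD (fun x hx => (hf x hx).continuousAt.continuousWithinAt)
    (by rw [hDo.interior_eq]; exact fun x hx => (hf x hx).hasDerivWithinAt)
    (by rwa [hDo.interior_eq])

theorem strictAntiOn_of_hasDerivAt_neg (hD : Convex ℝ D) (hDo : IsOpen D)
    (hf : ∀ x ∈ D, HasDerivAt f (f' x) x) (hf' : ∀ x ∈ D, f' x < 0) : StrictAntiOn f D := by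
  have hneg : StrictMonoOn (-f) D :=
    strictMonoOn_of_hasDerivAt_pos hD hDo (fun x hx => (hf x hx).neg) (fun x hx => by
      simpa using hf' x hx)
  exact fun x hx y hy hxy => neg_lt_neg_iff.mp (hneg hx hy hxy)

end Monotonicity

/-- The function `ρ` with `c = aᵀg`, `q = aᵀBa` and `s = ‖a‖²`. -/
noncomputable def modelRho (c q s t : ℝ) : ℝ :=
  t * c / (1 - t * s) + t ^ 2 * q / (2 * (1 - t * s) ^ 2)

section ModelRho

variable {c q s : ℝ}

theorem hasDerivAt_modelRho {t : ℝ} (ht : 1 - t * s ≠ 0) :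
    HasDerivAt (modelRho c q s) ((c + t * (q - s * c)) / (1 - t * s) ^ 3) t := by
  have hden : HasDerivAt (fun t : ℝ => 1 - t * s) (-s) t := by
    simpa using ((hasDerivAt_id t).mul_const s).const_sub 1
  have hlin : HasDerivAt (fun t : ℝ => t * c) c t := by
    simpa using (hasDerivAt_id t).mul_const c
  have hquad : HasDerivAt (fun t : ℝ => t ^ 2 * q) (2 * t * q) t := by
    simpa using (hasDerivAt_pow 2 t).mul_const q
  have hden2 : HasDerivAt (fun t : ℝ => 2 * (1 - t * s) ^ 2)
      (2 * ((2 : ℕ) * (1 - t * s) ^ 1 * (-s))) t := (hden.pow 2).const_mul 2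
  have hden2_ne : 2 * (1 - t * s) ^ 2 ≠ 0 := by positivity
  refine ((hlin.div hden ht).add (hquad.div hden2 hden2_ne)).congr_deriv ?_
  field_simp
  ring

theorem neg_div_lt_one_div_of_pos (hs : 0 < s) (hk : 0 < q - s * c) (hq : 0 < q) :
    -c / (q - s * c) < 1 / s := by
  rw [div_lt_div_iff₀ hk hs]
  linarith

theorem strictMonoOn_modelRho_Ioo (hs : 0 < s) (hk : 0 < q - s * c) :
    StrictMonoOn (modelRho c q s) (Ioo (-c / (q - s * c)) (1 / s)) := by
  have hpos : ∀ t ∈ Ioo (-c / (q - s * c)) (1 / s),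
      0 < c + t * (q - s * c) ∧ 0 < 1 - t * s := fun t ⟨hpt, htm⟩ => by
    rw [div_lt_iff₀ hk] at hpt
    rw [lt_div_iff₀ hs] at htm
    constructor <;> linarith
  refine strictMonoOn_of_hasDerivAt_pos (convex_Ioo _ _) isOpen_Ioo
    (fun t ht => hasDerivAt_modelRho (hpos t ht).2.ne') fun t ht => ?_
  have := hpos t ht
  exact div_pos this.1 (pow_pos this.2 3)

theorem strictAntiOn_modelRho_Iio (hs : 0 < s) (hk : 0 < q - s * c) (hq : 0 < q) :
    StrictAntiOn (modelRho c q s) (Iio (-c / (q - s * c))) := by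
  have hsign : ∀ t ∈ Iio (-c / (q - s * c)),
      c + t * (q - s * c) < 0 ∧ 0 < 1 - t * s := fun t htp => by
    have htm : t < 1 / s := htp.trans (neg_div_lt_one_div_of_pos hs hk hq)
    rw [mem_Iio, lt_div_iff₀ hk] at htp
    rw [lt_div_iff₀ hs] at htm
    constructor <;> linarith
  refine strictAntiOn_of_hasDerivAt_neg (convex_Iio _) isOpen_Iio
    (fun t ht => hasDerivAt_modelRho (hsign t ht).2.ne') fun t ht => ?_
  have := hsign t ht
  exact div_neg_of_neg_of_pos this.1 (pow_pos this.2 3)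

theorem strictAntiOn_modelRho_Ioi (hs : 0 < s) (hk : 0 < q - s * c) (hq : 0 < q) :
    StrictAntiOn (modelRho c q s) (Ioi (1 / s)) := by
  have hsign : ∀ t ∈ Ioi (1 / s),
      0 < c + t * (q - s * c) ∧ 1 - t * s < 0 := fun t hmt => by
    have hpt : -c / (q - s * c) < t := (neg_div_lt_one_div_of_pos hs hk hq).trans hmt
    rw [div_lt_iff₀ hk] at hpt
    rw [mem_Ioi, div_lt_iff₀ hs] at hmt
    constructor <;> linarith
  refine strictAntiOn_of_hasDerivAt_neg (convex_Ioi _) isOpen_Ioi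
    (fun t ht => hasDerivAt_modelRho (hsign t ht).2.ne) fun t ht => ?_
  have := hsign t ht
  exact div_neg_of_pos_of_neg this.1 (Odd.pow_neg (by decide) this.2)

end ModelRho

theorem stmt_2 {{n : ℕ}} (hn : 1 ≤ n)
    (a g : EuclideanSpace ℝ (Fin n)) (ha : a ≠ 0)
    (B : Matrix (Fin n) (Fin n) ℝ) (hBs : B.IsSymm) (hBpd : B.PosDef)
    (ρ : ℝ → ℝ)
    (hρ : ∀ τ : ℝ, τ ≠ 1 / ‖a‖ ^ 2 →
      ρ τ = τ * ⟪a, g⟫ / (1 - τ * ‖a‖ ^ 2)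
        + τ ^ 2 * ⟪a, Matrix.toEuclideanLin B a⟫ / (2 * (1 - τ * ‖a‖ ^ 2) ^ 2))
    (aτ τm : ℝ)
    (haτ : aτ = ⟪a, Matrix.toEuclideanLin B a⟫ - ‖a‖ ^ 2 * ⟪a, g⟫)
    (hτm : τm = 1 / ‖a‖ ^ 2)
    (τcp : ℝ) (hτcp : aτ ≠ 0 → τcp = -⟪a, g⟫ / aτ)
    (haτpos : 0 < aτ) :
    τcp < τm ∧ StrictMonoOn ρ (Set.Ioo τcp τm) ∧ StrictAntiOn ρ (Set.Iio τcp) ∧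
      StrictAntiOn ρ (Set.Ioi τm) := by
  obtain rfl := hτcp haτpos.ne'
  subst haτ hτm
  have hs : 0 < ‖a‖ ^ 2 := pow_pos (norm_pos_iff.mpr ha) 2
  have hq := hBpd.inner_self_toEuclideanLin_pos ha
  have hlt := neg_div_lt_one_div_of_pos hs haτpos hq
  have hρ_eq : EqOn (modelRho ⟪a, g⟫ ⟪a, B.toEuclideanLin a⟫ (‖a‖ ^ 2)) ρ {1 / ‖a‖ ^ 2}ᶜ :=
    fun τ hτ => (hρ τ hτ).symm
  exact ⟨hlt,
    (strictMonoOn_modelRho_Ioo hs haτpos).congr (hρ_eq.mono fun τ hτ => hτ.2.ne),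
    (strictAntiOn_modelRho_Iio hs haτpos hq).congr
      (hρ_eq.mono fun τ hτ => (hτ.trans hlt).ne),
    (strictAntiOn_modelRho_Ioi hs haτpos hq).congr (hρ_eq.mono fun τ hτ => hτ.ne')⟩
end

section
/- Assume Δ‖a‖ ≥ 1 + ε₀, a_τ ≥ 0 and aᵀg ≠ 0. Define τ* = −τ_Δ if a_τ = 0; τ* = max{−τ_Δ, τ_cp} if a_τ > 0 and aᵀg > 0; τ* = min{τ_cp, τ_d} if a_τ > 0 and aᵀg < 0. Then τ* lies in Ω = [−τ_Δ, τ_d] ∪ [τ_u, τ_Δ] and ρ(τ*) ≤ ρ(τ) for every τ ∈ Ω. -/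
open scoped RealInnerProductSpace

open Set

/-!
Write `s = ‖a‖²`, `c = aᵀg`, `b = aᵀBa`. The substitution `u = τ / (1 - τ s)` turns `ρ` into the
convex quadratic `c u + b u² / 2`, whose vertex `-c / b` is the image of `τ_cp`. The map
`τ ↦ u` is increasing on each of the branches `τ s < 1` and `τ s > 1`, and sends the first one above
`-1/s` and the second one below it. Hence on `[-τ_Δ, τ_d]` the quadratic is minimized at `τ_cp` or
at the endpoint nearest to it, while the image of `[τ_u, τ_Δ]` always lies farther from the vertex:
for the endpoint `-τ_Δ` this is the estimate `u(τ_Δ) + u(-τ_Δ) < -2/s ≤ -2c/b`, where the last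
inequality is `a_τ ≥ 0`.
-/

noncomputable def quadModel (b c u : ℝ) : ℝ := c * u + b * u ^ 2 / 2

noncomputable def effectiveStep (s τ : ℝ) : ℝ := τ / (1 - τ * s)

section QuadModel

lemma quadModel_sub_quadModel (b c u v : ℝ) :
    quadModel b c v - quadModel b c u = (v - u) * (2 * c + b * (u + v)) / 2 := by
  unfold quadModel; ring

variable {b c u v : ℝ}

lemma quadModel_le_of_le_of_nonneg (huv : u ≤ v) (h : 0 ≤ 2 * c + b * (u + v)) :
    quadModel b c u ≤ quadModel b c v := by
  have := quadModel_sub_quadModel b c u v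
  nlinarith [mul_nonneg (sub_nonneg.2 huv) h]

lemma quadModel_le_of_le_of_nonpos (huv : u ≤ v) (h : 2 * c + b * (u + v) ≤ 0) :
    quadModel b c v ≤ quadModel b c u := by
  have := quadModel_sub_quadModel b c u v
  nlinarith [mul_nonpos_of_nonneg_of_nonpos (sub_nonneg.2 huv) h]

lemma quadModel_vertex_le (hb : 0 < b) (v : ℝ) : quadModel b c (-c / b) ≤ quadModel b c v := by
  have : quadModel b c v - quadModel b c (-c / b) = b * (v + c / b) ^ 2 / 2 := by
    unfold quadModel; field_simp; ring
  nlinarith [mul_nonneg hb.le (sq_nonneg (v + c / b))]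

end QuadModel

section EffectiveStep

lemma quadModel_effectiveStep (s b c τ : ℝ) :
    quadModel b c (effectiveStep s τ) =
      τ * c / (1 - τ * s) + τ ^ 2 * b / (2 * (1 - τ * s) ^ 2) := by
  unfold quadModel effectiveStep
  generalize 1 - τ * s = w
  ring

variable {s b c x y τ T : ℝ}

lemma effectiveStep_le_effectiveStep (hxy : x ≤ y) (h : 0 < (1 - x * s) * (1 - y * s)) :
    effectiveStep s x ≤ effectiveStep s y := by
  have hx : 1 - x * s ≠ 0 := left_ne_zero_of_mul h.ne'
  have hy : 1 - y * s ≠ 0 := right_ne_zero_of_mul h.ne'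
  have : effectiveStep s y - effectiveStep s x = (y - x) / ((1 - y * s) * (1 - x * s)) := by
    rw [effectiveStep, effectiveStep, div_sub_div _ _ hy hx]
    congr 1; ring
  exact sub_nonneg.1 (this ▸ div_nonneg (sub_nonneg.2 hxy) (mul_comm (1 - x * s) _ ▸ h.le))

lemma effectiveStep_add_inv (hs : s ≠ 0) (hτ : 1 - τ * s ≠ 0) :
    effectiveStep s τ + s⁻¹ = (s * (1 - τ * s))⁻¹ := by
  unfold effectiveStep; field_simp; ring

lemma neg_inv_lt_effectiveStep (hs : 0 < s) (hτ : τ * s < 1) : -s⁻¹ < effectiveStep s τ := by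
  have := effectiveStep_add_inv hs.ne' (sub_pos.2 hτ).ne'
  have : 0 < (s * (1 - τ * s))⁻¹ := inv_pos.2 (mul_pos hs (sub_pos.2 hτ))
  linarith

lemma effectiveStep_lt_neg_inv (hs : 0 < s) (hτ : 1 < τ * s) : effectiveStep s τ < -s⁻¹ := by
  have := effectiveStep_add_inv hs.ne' (sub_neg.2 hτ).ne
  have : (s * (1 - τ * s))⁻¹ < 0 := inv_lt_zero.2 (mul_neg_of_pos_of_neg hs (sub_neg.2 hτ))
  linarith

lemma effectiveStep_nonneg (hτ : 0 ≤ τ) (hτs : τ * s < 1) : 0 ≤ effectiveStep s τ :=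
  div_nonneg hτ (sub_nonneg.2 hτs.le)

lemma effectiveStep_add_effectiveStep_neg_lt (hs : 0 < s) (hT : 1 < T * s) :
    effectiveStep s T + effectiveStep s (-T) < -2 * s⁻¹ := by
  have h1 : 1 - T * s ≠ 0 := (sub_neg.2 hT).ne
  have h2 : 1 - -T * s ≠ 0 := by nlinarith
  have h3 : 0 < (T * s) ^ 2 - 1 := by nlinarith
  have : -2 * s⁻¹ - (effectiveStep s T + effectiveStep s (-T)) = 2 / (s * ((T * s) ^ 2 - 1)) := by
    rw [effectiveStep, effectiveStep, div_add_div _ _ h1 h2, inv_eq_one_div, mul_one_div,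
      div_sub_div _ _ hs.ne' (mul_ne_zero h1 h2),
      div_eq_div_iff (mul_ne_zero hs.ne' (mul_ne_zero h1 h2)) (by positivity)]
    ring
  have : 0 < 2 / (s * ((T * s) ^ 2 - 1)) := by positivity
  linarith

lemma one_sub_critical_mul (hα : b - s * c ≠ 0) : 1 - -c / (b - s * c) * s = b / (b - s * c) := by
  rw [eq_div_iff hα, sub_mul, div_mul_eq_mul_div, div_mul_cancel₀ _ hα]; ring

lemma critical_mul_lt_one (hb : 0 < b) (hα : 0 < b - s * c) : -c / (b - s * c) * s < 1 := by
  have := one_sub_critical_mul hα.ne'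
  have : 0 < b / (b - s * c) := div_pos hb hα
  linarith

lemma effectiveStep_critical (hα : b - s * c ≠ 0) :
    effectiveStep s (-c / (b - s * c)) = -c / b := by
  rw [effectiveStep, one_sub_critical_mul hα, div_div_div_cancel_right₀ hα]

end EffectiveStep

section Feasible

variable {s b c T d e τ₀ : ℝ}

lemma mul_ne_one_of_mem (hd : d * s < 1) (he : 1 < e * s) (hs : 0 < s)
    (hτ : τ₀ ∈ Icc (-T) d ∪ Icc e T) : τ₀ * s ≠ 1 := by
  rcases hτ with ⟨-, hτd⟩ | ⟨heτ, -⟩ <;> nlinarith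

lemma isMinOn_of_effectiveStep_eq_vertex (hb : 0 < b) (h : effectiveStep s τ₀ = -c / b)
    (S : Set ℝ) : IsMinOn (quadModel b c ∘ effectiveStep s) S τ₀ :=
  isMinOn_iff.2 fun τ _ => by
    simpa only [Function.comp_apply, h] using quadModel_vertex_le hb (effectiveStep s τ)

lemma isMinOn_left_endpoint (hs : 0 < s) (hb : 0 ≤ b) (hsc : s * c ≤ b) (hd : d * s < 1)
    (he : 1 < e * s) (hT : 0 ≤ c + b * effectiveStep s (-T)) :
    IsMinOn (quadModel b c ∘ effectiveStep s) (Icc (-T) d ∪ Icc e T) (-T) := by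
  rw [isMinOn_iff]
  rintro τ (⟨hTτ, hτd⟩ | ⟨heτ, hτT⟩)
  · have hτs := mul_le_mul_of_nonneg_right hτd hs.le
    have hTs := mul_le_mul_of_nonneg_right hTτ hs.le
    have hmono := effectiveStep_le_effectiveStep (s := s) hTτ (mul_pos (by linarith) (by linarith))
    exact quadModel_le_of_le_of_nonneg hmono (by nlinarith [mul_le_mul_of_nonneg_left hmono hb])
  · have hτs : 1 < τ * s := by nlinarith
    have hTs : 1 < T * s := by nlinarith
    have hmono := effectiveStep_le_effectiveStep hτT (s := s) (by nlinarith)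
    have hsum := effectiveStep_add_effectiveStep_neg_lt hs hTs
    have hcb : c ≤ b * s⁻¹ := by rw [← div_eq_mul_inv, le_div_iff₀ hs]; linarith
    refine quadModel_le_of_le_of_nonpos
      ((effectiveStep_lt_neg_inv hs hτs).trans (neg_inv_lt_effectiveStep hs (by linarith))).le ?_
    nlinarith [mul_le_mul_of_nonneg_left (show effectiveStep s τ + effectiveStep s (-T) ≤ -2 * s⁻¹
      by linarith) hb]

lemma isMinOn_right_endpoint (hs : 0 < s) (hb : 0 ≤ b) (hd₀ : 0 ≤ d) (hd : d * s < 1)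
    (he : 1 < e * s) (hcd : c + b * effectiveStep s d ≤ 0) :
    IsMinOn (quadModel b c ∘ effectiveStep s) (Icc (-T) d ∪ Icc e T) d := by
  have hud := effectiveStep_nonneg hd₀ hd
  rw [isMinOn_iff]
  rintro τ (⟨hTτ, hτd⟩ | ⟨heτ, hτT⟩)
  · have hτs := mul_le_mul_of_nonneg_right hτd hs.le
    have hmono := effectiveStep_le_effectiveStep (s := s) hτd (mul_pos (by linarith) (by linarith))
    exact quadModel_le_of_le_of_nonpos hmono (by nlinarith [mul_le_mul_of_nonneg_left hmono hb])
  · have hτ : effectiveStep s τ < 0 :=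
      (effectiveStep_lt_neg_inv hs (by nlinarith)).trans (neg_neg_of_pos (inv_pos.2 hs))
    refine quadModel_le_of_le_of_nonpos (hτ.le.trans hud) ?_
    nlinarith [mul_nonpos_of_nonneg_of_nonpos hb hτ.le, mul_nonneg hb hud]

end Feasible

section Selection

variable {s b c T d e : ℝ}

lemma mem_Icc_and_isMinOn_max_critical (hs : 0 < s) (hb : 0 < b) (hα : 0 < b - s * c) (hc : 0 < c)
    (hT : 0 < T) (hd₀ : 0 < d) (hd : d * s < 1) (he : 1 < e * s) :
    max (-T) (-c / (b - s * c)) ∈ Icc (-T) d ∧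
      IsMinOn (quadModel b c ∘ effectiveStep s) (Icc (-T) d ∪ Icc e T)
        (max (-T) (-c / (b - s * c))) := by
  have hτc : -c / (b - s * c) < 0 := div_neg_of_neg_of_pos (neg_neg_of_pos hc) hα
  rcases le_total (-T) (-c / (b - s * c)) with hle | hlt
  · rw [max_eq_right hle]
    exact ⟨⟨hle, by linarith⟩,
      isMinOn_of_effectiveStep_eq_vertex hb (effectiveStep_critical hα.ne') _⟩
  · rw [max_eq_left hlt]
    refine ⟨⟨le_rfl, by linarith⟩, isMinOn_left_endpoint hs hb.le (by linarith) hd he ?_⟩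
    have := effectiveStep_le_effectiveStep (s := s) hlt
      (mul_pos (by nlinarith) (by nlinarith [critical_mul_lt_one hb hα]))
    rw [effectiveStep_critical hα.ne', div_le_iff₀ hb] at this
    linarith

lemma mem_Icc_and_isMinOn_min_critical (hs : 0 < s) (hb : 0 < b) (hα : 0 < b - s * c) (hc : c < 0)
    (hT : 0 < T) (hd₀ : 0 < d) (hd : d * s < 1) (he : 1 < e * s) :
    min (-c / (b - s * c)) d ∈ Icc (-T) d ∧
      IsMinOn (quadModel b c ∘ effectiveStep s) (Icc (-T) d ∪ Icc e T)
        (min (-c / (b - s * c)) d) := by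
  have hτc : 0 < -c / (b - s * c) := div_pos (neg_pos.2 hc) hα
  rcases le_total (-c / (b - s * c)) d with hle | hlt
  · rw [min_eq_left hle]
    exact ⟨⟨by linarith, hle⟩,
      isMinOn_of_effectiveStep_eq_vertex hb (effectiveStep_critical hα.ne') _⟩
  · rw [min_eq_right hlt]
    refine ⟨⟨by linarith, le_rfl⟩, isMinOn_right_endpoint hs hb.le hd₀.le hd he ?_⟩
    have := effectiveStep_le_effectiveStep (s := s) hlt
      (mul_pos (by linarith) (by linarith [critical_mul_lt_one hb hα]))
    rw [effectiveStep_critical hα.ne', le_div_iff₀ hb] at this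
    linarith

lemma mem_Icc_and_isMinOn_neg_of_sub_eq_zero (hs : 0 < s) (hb : 0 < b) (hα : b - s * c = 0)
    (hT : 0 < T) (hd₀ : 0 < d) (hd : d * s < 1) (he : 1 < e * s) :
    -T ∈ Icc (-T) d ∧ IsMinOn (quadModel b c ∘ effectiveStep s) (Icc (-T) d ∪ Icc e T) (-T) := by
  refine ⟨⟨le_rfl, by linarith⟩, isMinOn_left_endpoint hs hb.le (by linarith) hd he ?_⟩
  have := neg_inv_lt_effectiveStep hs (show -T * s < 1 by nlinarith)
  have hcb : b * s⁻¹ = c := by rw [← div_eq_mul_inv, div_eq_iff hs.ne']; linarith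
  nlinarith [mul_le_mul_of_nonneg_left this.le hb.le]

end Selection

lemma Matrix.PosDef.inner_toEuclideanLin_self_pos {ι : Type*} [Fintype ι] [DecidableEq ι]
    {B : Matrix ι ι ℝ} (hB : B.PosDef) {x : EuclideanSpace ℝ ι} (hx : x ≠ 0) :
    0 < ⟪x, Matrix.toEuclideanLin B x⟫ := by
  have := hB.dotProduct_mulVec_pos (x := WithLp.ofLp x) (by simpa using hx)
  simpa [EuclideanSpace.inner_eq_star_dotProduct, dotProduct_comm] using this

theorem stmt_7 {{n : ℕ}} (hn : 1 ≤ n)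
    (a g : EuclideanSpace ℝ (Fin n)) (ha : a ≠ 0)
    (B : Matrix (Fin n) (Fin n) ℝ) (hBs : B.IsSymm) (hBpd : B.PosDef)
    (ρ : ℝ → ℝ)
    (hρ : ∀ τ : ℝ, τ ≠ 1 / ‖a‖ ^ 2 →
      ρ τ = τ * ⟪a, g⟫ / (1 - τ * ‖a‖ ^ 2)
        + τ ^ 2 * ⟪a, Matrix.toEuclideanLin B a⟫ / (2 * (1 - τ * ‖a‖ ^ 2) ^ 2))
    (aτ τm : ℝ)
    (haτ : aτ = ⟪a, Matrix.toEuclideanLin B a⟫ - ‖a‖ ^ 2 * ⟪a, g⟫)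
    (hτm : τm = 1 / ‖a‖ ^ 2)
    (τcp : ℝ) (hτcp : aτ ≠ 0 → τcp = -⟪a, g⟫ / aτ)
    (Δ ε₀ : ℝ) (hΔ : 0 < Δ) (hε₀ : 0 < ε₀) (hε₁ : ε₀ < 1)
    (τΔ τd τu : ℝ) (hτΔ : τΔ = Δ / ‖a‖) (hτd : τd = (1 - ε₀) / ‖a‖ ^ 2)
    (hτu : τu = (1 + ε₀) / ‖a‖ ^ 2)
    (hcase : 1 + ε₀ ≤ Δ * ‖a‖) (haτnn : 0 ≤ aτ) (hag : ⟪a, g⟫ ≠ 0)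
    (τstar : ℝ)
    (hτs1 : aτ = 0 → τstar = -τΔ)
    (hτs2 : 0 < aτ → 0 < ⟪a, g⟫ → τstar = max (-τΔ) τcp)
    (hτs3 : 0 < aτ → ⟪a, g⟫ < 0 → τstar = min τcp τd) :
    τstar ∈ Set.Icc (-τΔ) τd ∪ Set.Icc τu τΔ ∧
      ∀ τ ∈ Set.Icc (-τΔ) τd ∪ Set.Icc τu τΔ, ρ τstar ≤ ρ τ := by
  have hb := hBpd.inner_toEuclideanLin_self_pos ha
  have hna : 0 < ‖a‖ := norm_pos_iff.2 ha
  set s := ‖a‖ ^ 2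
  set c := ⟪a, g⟫
  set b := ⟪a, Matrix.toEuclideanLin B a⟫
  have hs : 0 < s := by positivity
  have hT : 0 < τΔ := hτΔ ▸ div_pos hΔ hna
  have hd₀ : 0 < τd := hτd ▸ div_pos (by linarith) hs
  have hd : τd * s < 1 := by rw [hτd, div_mul_cancel₀ _ hs.ne']; linarith
  have he : 1 < τu * s := by rw [hτu, div_mul_cancel₀ _ hs.ne']; linarith
  subst haτ
  obtain ⟨hmem, hmin⟩ : τstar ∈ Icc (-τΔ) τd ∧
      IsMinOn (quadModel b c ∘ effectiveStep s) (Icc (-τΔ) τd ∪ Icc τu τΔ) τstar := by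
    rcases haτnn.eq_or_lt with hα | hα
    · rw [hτs1 hα.symm]
      exact mem_Icc_and_isMinOn_neg_of_sub_eq_zero hs hb hα.symm hT hd₀ hd he
    rw [hτcp hα.ne'] at hτs2 hτs3
    rcases hag.lt_or_gt with hc | hc
    · rw [hτs3 hα hc]
      exact mem_Icc_and_isMinOn_min_critical hs hb hα hc hT hd₀ hd he
    · rw [hτs2 hα hc]
      exact mem_Icc_and_isMinOn_max_critical hs hb hα hc hT hd₀ hd he
  have hρ_eq : ∀ τ ∈ Icc (-τΔ) τd ∪ Icc τu τΔ, ρ τ = (quadModel b c ∘ effectiveStep s) τ :=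
    fun τ hτ => by
      rw [hρ τ fun h => mul_ne_one_of_mem hd he hs hτ ((eq_div_iff hs.ne').1 h),
        Function.comp_apply, quadModel_effectiveStep]
  refine ⟨Or.inl hmem, fun τ hτ => ?_⟩
  rw [hρ_eq _ (Or.inl hmem), hρ_eq τ hτ]
  exact isMinOn_iff.1 hmin τ hτ
end
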